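/- arXiv:2208.01719 — 3 statements merged into one kernel-verified Lean document; each statement's English description precedes it below -/
import Mathlib

section
/- For every δ ∈ [0,1), θ ∈ [0,(1−δ)/2), and λ > 0, setting ε = (1+δ)/2 − √((1−δ)²/4 − θ²) (so ε < 1 and θ/(1−ε) < 1), there exists a constant C > 0 (depending only on δ, θ, λ) with the following property. For every streaming least-squares setup satisfying the stability hypotheses with parameters κ, δ, θ, λ and with M_y = κ^{−1/2}·sup_{k≥0} ‖(y_k, y_{k+1})‖₂ finite, the following holds: for each k ≥ 0 the sequence K ↦ α_{k|K} (K ≥ k) converges to a limit α*_k ∈ ℝ^N, and for all K ≥ k, ‖α_{k|K} − α*_k‖₂ ≤ C · M_y · (θ/(1−ε))^{K−k}. -/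
open Matrix

/-- Euclidean (ℓ²) norm of a vector in ℝ^n. -/
noncomputable def vecNorm {n : Type*} [Fintype n] (v : n → ℝ) : ℝ :=
  Real.sqrt (∑ i, v i ^ 2)

/-- Spectral norm (largest singular value) of a real matrix, defined as the operator
norm: the supremum of `‖A x‖₂` over unit vectors `x`. -/
noncomputable def matSpectralNorm {m n : Type*} [Fintype m] [Fintype n]
    (A : Matrix m n ℝ) : ℝ :=
  sSup ((fun x => vecNorm (A.mulVec x)) '' {x | vecNorm x = 1})

/-- Smallest eigenvalue of a real symmetric matrix, via the Rayleigh quotient. -/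
noncomputable def eigMin {n : Type*} [Fintype n] (S : Matrix n n ℝ) : ℝ :=
  sInf ((fun x => x ⬝ᵥ S.mulVec x) '' {x | vecNorm x = 1})

section Streaming

variable {N : ℕ} {M : ℕ → ℕ}

/-- `D_k = A_kᵀ A_k + B_{k+1}ᵀ B_{k+1} + λ_k I`. -/
noncomputable def Dmat (A B : ∀ k : ℕ, Matrix (Fin (M k)) (Fin N) ℝ) (lam : ℕ → ℝ)
    (k : ℕ) : Matrix (Fin N) (Fin N) ℝ :=
  (A k)ᵀ * A k + (B (k + 1))ᵀ * B (k + 1) + lam k • 1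

/-- `E_k = A_{k+1}ᵀ B_{k+1}`. -/
noncomputable def Emat (A B : ∀ k : ℕ, Matrix (Fin (M k)) (Fin N) ℝ) (k : ℕ) :
    Matrix (Fin N) (Fin N) ℝ :=
  (A (k + 1))ᵀ * B (k + 1)

/-- `D_k' = A_kᵀ A_k + λ_k I`. -/
noncomputable def Dmat' (A : ∀ k : ℕ, Matrix (Fin (M k)) (Fin N) ℝ) (lam : ℕ → ℝ)
    (k : ℕ) : Matrix (Fin N) (Fin N) ℝ :=
  (A k)ᵀ * A k + lam k • 1

/-- `Q₀ = D₀`, `Q_{k+1} = D_{k+1} − E_k U_k` with `U_k = Q_k⁻¹ E_kᵀ`. -/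
noncomputable def Qmat (A B : ∀ k : ℕ, Matrix (Fin (M k)) (Fin N) ℝ) (lam : ℕ → ℝ) :
    ℕ → Matrix (Fin N) (Fin N) ℝ
  | 0 => Dmat A B lam 0
  | k + 1 => Dmat A B lam (k + 1) - Emat A B k * ((Qmat A B lam k)⁻¹ * (Emat A B k)ᵀ)

/-- `U_k = Q_k⁻¹ E_kᵀ`. -/
noncomputable def Umat (A B : ∀ k : ℕ, Matrix (Fin (M k)) (Fin N) ℝ) (lam : ℕ → ℝ)
    (k : ℕ) : Matrix (Fin N) (Fin N) ℝ :=
  (Qmat A B lam k)⁻¹ * (Emat A B k)ᵀ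

/-- `Q₀' = D₀'`, `Q_k' = D_k' − E_{k−1} U_{k−1}` for `k ≥ 1`. -/
noncomputable def Qmat' (A B : ∀ k : ℕ, Matrix (Fin (M k)) (Fin N) ℝ) (lam : ℕ → ℝ) :
    ℕ → Matrix (Fin N) (Fin N) ℝ
  | 0 => Dmat' A lam 0
  | k + 1 => Dmat' A lam (k + 1) - Emat A B k * Umat A B lam k

/-- `w_k = A_kᵀ y_k + B_{k+1}ᵀ y_{k+1}`. -/
noncomputable def wvec (A B : ∀ k : ℕ, Matrix (Fin (M k)) (Fin N) ℝ)
    (y : ∀ k : ℕ, Fin (M k) → ℝ) (k : ℕ) : Fin N → ℝ :=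
  (A k)ᵀ.mulVec (y k) + (B (k + 1))ᵀ.mulVec (y (k + 1))

/-- `w_k' = A_kᵀ y_k`. -/
noncomputable def wvec' (A : ∀ k : ℕ, Matrix (Fin (M k)) (Fin N) ℝ)
    (y : ∀ k : ℕ, Fin (M k) → ℝ) (k : ℕ) : Fin N → ℝ :=
  (A k)ᵀ.mulVec (y k)

/-- `v₀ = Q₀⁻¹ w₀`, `v_k = Q_k⁻¹ (w_k − E_{k−1} v_{k−1})` for `k ≥ 1`. -/
noncomputable def vvec (A B : ∀ k : ℕ, Matrix (Fin (M k)) (Fin N) ℝ) (lam : ℕ → ℝ)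
    (y : ∀ k : ℕ, Fin (M k) → ℝ) : ℕ → Fin N → ℝ
  | 0 => (Qmat A B lam 0)⁻¹.mulVec (wvec A B y 0)
  | k + 1 => (Qmat A B lam (k + 1))⁻¹.mulVec
      (wvec A B y (k + 1) - (Emat A B k).mulVec (vvec A B lam y k))

/-- `v₀' = Q₀'⁻¹ w₀'`, `v_K' = Q_K'⁻¹ (w_K' − E_{K−1} v_{K−1})` for `K ≥ 1`. -/
noncomputable def vvec' (A B : ∀ k : ℕ, Matrix (Fin (M k)) (Fin N) ℝ) (lam : ℕ → ℝ)
    (y : ∀ k : ℕ, Fin (M k) → ℝ) : ℕ → Fin N → ℝ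
  | 0 => (Qmat' A B lam 0)⁻¹.mulVec (wvec' A y 0)
  | K + 1 => (Qmat' A B lam (K + 1))⁻¹.mulVec
      (wvec' A y (K + 1) - (Emat A B K).mulVec (vvec A B lam y K))

/-- Backward recursion producing the streaming least-squares estimates, indexed by the
lag `l = K − k`: `alphaAux K 0 = v_K'` and `alphaAux K (l+1) = v_{K−l−1} − U_{K−l−1} ·
alphaAux K l`. -/
noncomputable def alphaAux (A B : ∀ k : ℕ, Matrix (Fin (M k)) (Fin N) ℝ) (lam : ℕ → ℝ)
    (y : ∀ k : ℕ, Fin (M k) → ℝ) (K : ℕ) : ℕ → Fin N → ℝ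
  | 0 => vvec' A B lam y K
  | l + 1 => vvec A B lam y (K - (l + 1)) -
      (Umat A B lam (K - (l + 1))).mulVec (alphaAux A B lam y K l)

/-- The streaming least-squares estimate `α_{k|K}` (for `0 ≤ k ≤ K`): it satisfies
`α_{K|K} = v_K'` and `α_{k|K} = v_k − U_k α_{k+1|K}` for `k < K`. -/
noncomputable def alphaEst (A B : ∀ k : ℕ, Matrix (Fin (M k)) (Fin N) ℝ) (lam : ℕ → ℝ)
    (y : ∀ k : ℕ, Fin (M k) → ℝ) (k K : ℕ) : Fin N → ℝ :=
  alphaAux A B lam y K (K - k)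

end Streaming

/-! The stability hypotheses make `D_k` coercive with constant `κ(1-δ)` and bound `E_k` by `κθ`.
The Schur-complement recursion `Q_{k+1} = D_{k+1} - E_k Q_k⁻¹ E_kᵀ` then keeps every `Q_k`
coercive with constant `κ(1-ε)`, since `ε` is chosen so that `(1-δ) - θ²/(1-ε) = 1-ε`. Hence
`‖U_k‖ ≤ r = θ/(1-ε) < 1`, and the forward vectors `v_k`, `v_k'` are bounded by multiples of
`M_y`. Passing from the horizon `K` to `K+1` perturbs `α_{K|K}` by a bounded vector, and the
backward recursion multiplies this perturbation by `-U_j` at each of the `K-k` steps down to `k`,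
so `K ↦ α_{k|K}` is Cauchy with geometric rate `r`. -/

section VecNorm

variable {n m : Type*} [Fintype n] [Fintype m]

open WithLp

lemma vecNorm_eq_norm (v : n → ℝ) : vecNorm v = ‖toLp 2 v‖ := by
  simp [vecNorm, EuclideanSpace.norm_eq, sq_abs]

lemma dotProduct_eq_inner (v w : n → ℝ) : v ⬝ᵥ w = inner ℝ (toLp 2 v) (toLp 2 w) := by
  rw [EuclideanSpace.inner_toLp_toLp, star_trivial, dotProduct_comm]

lemma vecNorm_nonneg (v : n → ℝ) : 0 ≤ vecNorm v := Real.sqrt_nonneg _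

lemma vecNorm_eq_zero {v : n → ℝ} : vecNorm v = 0 ↔ v = 0 := by
  rw [vecNorm_eq_norm, norm_eq_zero, ← toLp_zero 2, (toLp_injective 2).eq_iff]

lemma vecNorm_add_le (v w : n → ℝ) : vecNorm (v + w) ≤ vecNorm v + vecNorm w := by
  simpa only [vecNorm_eq_norm, toLp_add] using norm_add_le _ _

lemma vecNorm_sub_le (v w : n → ℝ) : vecNorm (v - w) ≤ vecNorm v + vecNorm w := by
  simpa only [vecNorm_eq_norm, toLp_sub] using norm_sub_le _ _

lemma vecNorm_neg (v : n → ℝ) : vecNorm (-v) = vecNorm v := by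
  simp only [vecNorm_eq_norm, toLp_neg, norm_neg]

lemma vecNorm_smul (c : ℝ) (v : n → ℝ) : vecNorm (c • v) = |c| * vecNorm v := by
  simp only [vecNorm_eq_norm, toLp_smul, norm_smul, Real.norm_eq_abs]

lemma dotProduct_self_eq_vecNorm_sq (v : n → ℝ) : v ⬝ᵥ v = vecNorm v ^ 2 := by
  rw [dotProduct_eq_inner, vecNorm_eq_norm, real_inner_self_eq_norm_sq]

lemma abs_dotProduct_le (v w : n → ℝ) : |v ⬝ᵥ w| ≤ vecNorm v * vecNorm w := by
  rw [dotProduct_eq_inner, vecNorm_eq_norm, vecNorm_eq_norm]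
  exact abs_real_inner_le_norm _ _

lemma dotProduct_le_vecNorm_mul (v w : n → ℝ) : v ⬝ᵥ w ≤ vecNorm v * vecNorm w :=
  (le_abs_self _).trans (abs_dotProduct_le v w)

lemma vecNorm_inv_smul_self {v : n → ℝ} (hv : v ≠ 0) : vecNorm ((vecNorm v)⁻¹ • v) = 1 := by
  have hpos : 0 < vecNorm v := (vecNorm_nonneg v).lt_of_ne' (vecNorm_eq_zero.not.mpr hv)
  rw [vecNorm_smul, abs_of_pos (inv_pos.mpr hpos), inv_mul_cancel₀ hpos.ne']

end VecNorm

namespace Matrix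

variable {n m l : Type*} [Fintype n] [Fintype m] [Fintype l]

def OpBound (A : Matrix m n ℝ) (c : ℝ) : Prop :=
  ∀ v, vecNorm (A *ᵥ v) ≤ c * vecNorm v

lemma OpBound.vecNorm_mulVec_le {A : Matrix m n ℝ} {c V : ℝ} (h : OpBound A c) (hc : 0 ≤ c)
    {v : n → ℝ} (hv : vecNorm v ≤ V) : vecNorm (A *ᵥ v) ≤ c * V :=
  (h v).trans (mul_le_mul_of_nonneg_left hv hc)

lemma OpBound.vecNorm_sub_mulVec_le {A : Matrix m n ℝ} {c W V : ℝ} (h : OpBound A c)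
    (hc : 0 ≤ c) {w : m → ℝ} {v : n → ℝ} (hw : vecNorm w ≤ W) (hv : vecNorm v ≤ V) :
    vecNorm (w - A *ᵥ v) ≤ W + c * V :=
  (vecNorm_sub_le _ _).trans (add_le_add hw (h.vecNorm_mulVec_le hc hv))

lemma exists_opBound [DecidableEq n] (A : Matrix m n ℝ) : ∃ c, OpBound A c := by
  refine ⟨‖(toEuclideanLin A).toContinuousLinearMap‖, fun v => ?_⟩
  rw [vecNorm_eq_norm, vecNorm_eq_norm]
  exact (toEuclideanLin A).toContinuousLinearMap.le_opNorm (WithLp.toLp 2 v)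

lemma OpBound.of_unit {A : Matrix m n ℝ} {c : ℝ}
    (h : ∀ u : n → ℝ, vecNorm u = 1 → vecNorm (A *ᵥ u) ≤ c) : OpBound A c := by
  intro v
  rcases eq_or_ne v 0 with rfl | hv
  · simp [vecNorm_eq_norm]
  have hpos : 0 < vecNorm v := (vecNorm_nonneg v).lt_of_ne' (vecNorm_eq_zero.not.mpr hv)
  have hAv : A *ᵥ v = vecNorm v • A *ᵥ ((vecNorm v)⁻¹ • v) := by
    rw [mulVec_smul, smul_smul, mul_inv_cancel₀ hpos.ne', one_smul]
  rw [hAv, vecNorm_smul, abs_of_pos hpos, mul_comm c]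
  exact mul_le_mul_of_nonneg_left (h _ (vecNorm_inv_smul_self hv)) hpos.le

lemma opBound_of_matSpectralNorm_le [DecidableEq n] {A : Matrix m n ℝ} {c : ℝ}
    (h : matSpectralNorm A ≤ c) : OpBound A c := by
  refine OpBound.of_unit fun u hu => le_trans ?_ h
  obtain ⟨C, hC⟩ := exists_opBound A
  refine le_csSup ⟨C, ?_⟩ ⟨u, hu, rfl⟩
  rintro _ ⟨x, hx, rfl⟩
  simpa only [show vecNorm x = 1 from hx, mul_one] using hC x

lemma OpBound.mul {A : Matrix m n ℝ} {B : Matrix n l ℝ} {a b : ℝ} (hA : OpBound A a)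
    (hB : OpBound B b) (ha : 0 ≤ a) : OpBound (A * B) (a * b) := fun v => by
  rw [← mulVec_mulVec, mul_assoc]
  exact (hA _).trans (mul_le_mul_of_nonneg_left (hB v) ha)

lemma OpBound.transpose {A : Matrix m n ℝ} {c : ℝ} (h : OpBound A c) (hc : 0 ≤ c) :
    OpBound Aᵀ c := by
  intro x
  set z := Aᵀ *ᵥ x
  have hz : vecNorm z ^ 2 ≤ vecNorm x * (c * vecNorm z) :=
    calc vecNorm z ^ 2 = x ⬝ᵥ A *ᵥ z := by
          rw [← dotProduct_self_eq_vecNorm_sq, dotProduct_mulVec, vecMul_transpose,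
            dotProduct_comm]
      _ ≤ vecNorm x * vecNorm (A *ᵥ z) := dotProduct_le_vecNorm_mul _ _
      _ ≤ vecNorm x * (c * vecNorm z) := mul_le_mul_of_nonneg_left (h z) (vecNorm_nonneg x)
  nlinarith [vecNorm_nonneg x, vecNorm_nonneg z, mul_nonneg hc (vecNorm_nonneg x)]

def Coercive (Q : Matrix n n ℝ) (c : ℝ) : Prop :=
  ∀ x, c * vecNorm x ^ 2 ≤ x ⬝ᵥ Q *ᵥ x

lemma Coercive.mono {Q : Matrix n n ℝ} {c c' : ℝ} (h : Coercive Q c) (hc : c' ≤ c) :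
    Coercive Q c' := fun x => (mul_le_mul_of_nonneg_right hc (sq_nonneg _)).trans (h x)

lemma coercive_of_le_eigMin [DecidableEq n] {Q : Matrix n n ℝ} {c : ℝ} (h : c ≤ eigMin Q) :
    Coercive Q c := by
  obtain ⟨C, hC⟩ := exists_opBound Q
  have hunit : ∀ u : n → ℝ, vecNorm u = 1 → c ≤ u ⬝ᵥ Q *ᵥ u := by
    intro u hu
    refine h.trans (csInf_le ⟨-C, ?_⟩ ⟨u, hu, rfl⟩)
    rintro _ ⟨x, hx, rfl⟩
    have := (abs_dotProduct_le x (Q *ᵥ x)).trans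
      (mul_le_mul_of_nonneg_left (hC x) (vecNorm_nonneg x))
    rw [(hx : vecNorm x = 1), one_mul, mul_one] at this
    exact neg_le_of_abs_le this
  intro x
  rcases eq_or_ne x 0 with rfl | hx
  · simp [vecNorm_eq_norm]
  have hpos : 0 < vecNorm x := (vecNorm_nonneg x).lt_of_ne' (vecNorm_eq_zero.not.mpr hx)
  have hq := hunit _ (vecNorm_inv_smul_self hx)
  rw [mulVec_smul, smul_dotProduct, dotProduct_smul, smul_eq_mul, smul_eq_mul, ← mul_assoc] at hq
  calc c * vecNorm x ^ 2 ≤ (vecNorm x)⁻¹ * (vecNorm x)⁻¹ * (x ⬝ᵥ Q *ᵥ x) * vecNorm x ^ 2 :=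
        mul_le_mul_of_nonneg_right hq (sq_nonneg _)
    _ = x ⬝ᵥ Q *ᵥ x := by field_simp

lemma OpBound.abs_dotProduct_mulVec_le {A : Matrix n n ℝ} {t : ℝ} (h : OpBound A t) (x : n → ℝ) :
    |x ⬝ᵥ A *ᵥ x| ≤ t * vecNorm x ^ 2 :=
  calc |x ⬝ᵥ A *ᵥ x| ≤ vecNorm x * vecNorm (A *ᵥ x) := abs_dotProduct_le _ _
    _ ≤ vecNorm x * (t * vecNorm x) := mul_le_mul_of_nonneg_left (h x) (vecNorm_nonneg x)
    _ = t * vecNorm x ^ 2 := by ring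

lemma dotProduct_mulVec_eq_sub_smul_one_add [DecidableEq n] (D : Matrix n n ℝ) (s : ℝ)
    (x : n → ℝ) : x ⬝ᵥ D *ᵥ x = x ⬝ᵥ (D - s • 1) *ᵥ x + s * vecNorm x ^ 2 := by
  rw [sub_mulVec, dotProduct_sub, smul_mulVec, one_mulVec, dotProduct_smul, smul_eq_mul,
    dotProduct_self_eq_vecNorm_sq, sub_add_cancel]

lemma coercive_of_opBound_sub_smul_one [DecidableEq n] {D : Matrix n n ℝ} {s t : ℝ}
    (h : OpBound (D - s • 1) t) : Coercive D (s - t) := fun x => by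
  have := (abs_le.mp (h.abs_dotProduct_mulVec_le x)).1
  rw [dotProduct_mulVec_eq_sub_smul_one_add D s x]
  linarith

lemma dotProduct_mulVec_le_of_opBound_sub_smul_one [DecidableEq n] {D : Matrix n n ℝ} {s t : ℝ}
    (h : OpBound (D - s • 1) t) (x : n → ℝ) : x ⬝ᵥ D *ᵥ x ≤ (s + t) * vecNorm x ^ 2 := by
  have := (abs_le.mp (h.abs_dotProduct_mulVec_le x)).2
  rw [dotProduct_mulVec_eq_sub_smul_one_add D s x]
  linarith

lemma Coercive.isUnit [DecidableEq n] {Q : Matrix n n ℝ} {c : ℝ} (h : Coercive Q c) (hc : 0 < c) :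
    IsUnit Q := by
  refine mulVec_injective_iff_isUnit.mp fun x y hxy => ?_
  have hx := h (x - y)
  rw [mulVec_sub, hxy, sub_self, dotProduct_zero] at hx
  have hsq : vecNorm (x - y) ^ 2 = 0 := (nonpos_of_mul_nonpos_right hx hc).antisymm (sq_nonneg _)
  exact sub_eq_zero.mp (vecNorm_eq_zero.mp (pow_eq_zero_iff two_ne_zero |>.mp hsq))

lemma Coercive.opBound_inv [DecidableEq n] {Q : Matrix n n ℝ} {c : ℝ} (h : Coercive Q c)
    (hc : 0 < c) : OpBound Q⁻¹ c⁻¹ := by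
  intro y
  set x := Q⁻¹ *ᵥ y
  have hQx : Q *ᵥ x = y := by
    rw [mulVec_mulVec, mul_nonsing_inv Q ((isUnit_iff_isUnit_det Q).mp (h.isUnit hc)), one_mulVec]
  have hx : c * vecNorm x ^ 2 ≤ vecNorm x * vecNorm y :=
    (hQx ▸ h x).trans (dotProduct_le_vecNorm_mul x y)
  rw [inv_mul_eq_div, le_div_iff₀ hc]
  nlinarith [vecNorm_nonneg x, vecNorm_nonneg y]

lemma Coercive.sub_mul_mul_transpose {D E P : Matrix n n ℝ} {d e b : ℝ} (hD : Coercive D d)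
    (hE : OpBound Eᵀ e) (hP : OpBound P b) (hb : 0 ≤ b) :
    Coercive (D - E * (P * Eᵀ)) (d - b * e ^ 2) := by
  intro x
  set u := Eᵀ *ᵥ x
  have hsplit : x ⬝ᵥ (D - E * (P * Eᵀ)) *ᵥ x = x ⬝ᵥ D *ᵥ x - u ⬝ᵥ P *ᵥ u := by
    rw [sub_mulVec, dotProduct_sub, ← mulVec_mulVec, ← mulVec_mulVec, dotProduct_mulVec x E,
      ← mulVec_transpose]
  have hu : vecNorm u ^ 2 ≤ e ^ 2 * vecNorm x ^ 2 := by
    rw [← mul_pow]; exact pow_le_pow_left₀ (vecNorm_nonneg u) (hE x) 2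
  have hPu : u ⬝ᵥ P *ᵥ u ≤ b * (e ^ 2 * vecNorm x ^ 2) :=
    (le_abs_self _).trans <| (hP.abs_dotProduct_mulVec_le u).trans <|
      mul_le_mul_of_nonneg_left hu hb
  rw [hsplit]
  linarith [hD x]

end Matrix

open Filter Topology

lemma exists_tendsto_vecNorm_sub_le_of_le_geometric {n : Type*} [Fintype n] {f : ℕ → n → ℝ}
    {C r : ℝ} (hr : r < 1) (h : ∀ m, vecNorm (f (m + 1) - f m) ≤ C * r ^ m) :
    ∃ a, Tendsto f atTop (𝓝 a) ∧ ∀ m, vecNorm (f m - a) ≤ C * r ^ m / (1 - r) := by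
  set g : ℕ → EuclideanSpace ℝ n := fun m => WithLp.toLp 2 (f m)
  have hdist : ∀ m, dist (g m) (g (m + 1)) ≤ C * r ^ m := fun m => by
    rw [dist_comm, dist_eq_norm, ← WithLp.toLp_sub, ← vecNorm_eq_norm]
    exact h m
  obtain ⟨b, hb⟩ := cauchySeq_tendsto_of_complete (cauchySeq_of_le_geometric r C hr hdist)
  refine ⟨WithLp.ofLp b, ((PiLp.continuous_ofLp 2 _).tendsto b).comp hb, fun m => ?_⟩
  rw [vecNorm_eq_norm, WithLp.toLp_sub, WithLp.toLp_ofLp, ← dist_eq_norm]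
  exact dist_le_of_le_geometric_of_tendsto r C hr hdist hb m

section Streaming

variable {N : ℕ} {M : ℕ → ℕ} (A B : ∀ k : ℕ, Matrix (Fin (M k)) (Fin N) ℝ) (lam : ℕ → ℝ)
  (y : ∀ k : ℕ, Fin (M k) → ℝ)

lemma dotProduct_Dmat_mulVec (k : ℕ) (x : Fin N → ℝ) :
    x ⬝ᵥ Dmat A B lam k *ᵥ x =
      vecNorm (A k *ᵥ x) ^ 2 + vecNorm (B (k + 1) *ᵥ x) ^ 2 + lam k * vecNorm x ^ 2 := by
  have hgram : ∀ {m : ℕ} (C : Matrix (Fin m) (Fin N) ℝ),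
      x ⬝ᵥ (Cᵀ * C) *ᵥ x = vecNorm (C *ᵥ x) ^ 2 := fun C => by
    rw [← mulVec_mulVec, dotProduct_mulVec, vecMul_transpose, dotProduct_self_eq_vecNorm_sq]
  rw [Dmat, add_mulVec, add_mulVec, dotProduct_add, dotProduct_add, hgram, hgram, smul_mulVec,
    one_mulVec, dotProduct_smul, smul_eq_mul, dotProduct_self_eq_vecNorm_sq]

lemma opBound_of_dotProduct_Dmat_mulVec_le {k : ℕ} {c : ℝ} (hlam : 0 ≤ lam k)
    (h : ∀ x, x ⬝ᵥ Dmat A B lam k *ᵥ x ≤ c * vecNorm x ^ 2) :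
    OpBound (A k) √c ∧ OpBound (B (k + 1)) √c := by
  have hsqrt : ∀ {t : ℝ} (x : Fin N → ℝ), t ^ 2 ≤ c * vecNorm x ^ 2 → t ≤ √c * vecNorm x :=
    fun x htc => by
      rw [← Real.sqrt_sq (vecNorm_nonneg x), ← Real.sqrt_mul' c (sq_nonneg _)]
      exact Real.le_sqrt_of_sq_le htc
  refine ⟨fun x => hsqrt x ?_, fun x => hsqrt x ?_⟩ <;>
  · have := h x
    rw [dotProduct_Dmat_mulVec] at this
    nlinarith [mul_nonneg hlam (sq_nonneg (vecNorm x)), sq_nonneg (vecNorm (A k *ᵥ x)),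
      sq_nonneg (vecNorm (B (k + 1) *ᵥ x))]

lemma coercive_Qmat {c d e : ℝ} (hD : ∀ k, Coercive (Dmat A B lam k) d)
    (hE : ∀ k, OpBound (Emat A B k)ᵀ e) (hc : 0 < c) (hcd : c ≤ d - c⁻¹ * e ^ 2) (k : ℕ) :
    Coercive (Qmat A B lam k) c := by
  induction k with
  | zero => exact (hD 0).mono (hcd.trans (by have := inv_nonneg.mpr hc.le; nlinarith))
  | succ k ih =>
    exact ((hD (k + 1)).sub_mul_mul_transpose (hE k) (ih.opBound_inv hc)
      (inv_nonneg.mpr hc.le)).mono hcd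

variable {A B lam y}

lemma vecNorm_vvec_le {q e W V : ℝ} (hQ : ∀ k, OpBound (Qmat A B lam k)⁻¹ q) (hq : 0 ≤ q)
    (hE : ∀ k, OpBound (Emat A B k) e) (he : 0 ≤ e) (hw : ∀ k, vecNorm (wvec A B y k) ≤ W)
    (hV : q * (W + e * V) ≤ V) (hV0 : 0 ≤ V) (k : ℕ) : vecNorm (vvec A B lam y k) ≤ V := by
  induction k with
  | zero =>
    refine (hQ 0 _).trans (le_trans ?_ hV)
    exact mul_le_mul_of_nonneg_left ((hw 0).trans (le_add_of_nonneg_right (by positivity))) hq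
  | succ k ih =>
    exact ((hQ (k + 1)).vecNorm_mulVec_le hq
      ((hE k).vecNorm_sub_mulVec_le he (hw (k + 1)) ih)).trans hV

lemma vecNorm_vvec'_le {q e W V : ℝ} (hQ : ∀ k, OpBound (Qmat' A B lam k)⁻¹ q) (hq : 0 ≤ q)
    (hE : ∀ k, OpBound (Emat A B k) e) (he : 0 ≤ e) (hw : ∀ k, vecNorm (wvec' A y k) ≤ W)
    (hv : ∀ k, vecNorm (vvec A B lam y k) ≤ V) (k : ℕ) :
    vecNorm (vvec' A B lam y k) ≤ q * (W + e * V) := by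
  cases k with
  | zero =>
    have hV0 : 0 ≤ V := (vecNorm_nonneg _).trans (hv 0)
    refine (hQ 0 _).trans (mul_le_mul_of_nonneg_left ?_ hq)
    exact (hw 0).trans (le_add_of_nonneg_right (by positivity))
  | succ k =>
    exact (hQ (k + 1)).vecNorm_mulVec_le hq ((hE k).vecNorm_sub_mulVec_le he (hw (k + 1)) (hv k))

lemma vecNorm_alphaAux_succ_sub_le {r V V' : ℝ} (hU : ∀ k, OpBound (Umat A B lam k) r)
    (hr : 0 ≤ r) (hv : ∀ k, vecNorm (vvec A B lam y k) ≤ V)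
    (hv' : ∀ k, vecNorm (vvec' A B lam y k) ≤ V') (l K : ℕ) (hlK : l ≤ K) :
    vecNorm (alphaAux A B lam y (K + 1) (l + 1) - alphaAux A B lam y K l) ≤
      (V + r * V' + V') * r ^ l := by
  induction l with
  | zero =>
    have hstep : alphaAux A B lam y (K + 1) 1 =
        vvec A B lam y K - Umat A B lam K *ᵥ vvec' A B lam y (K + 1) := by
      simp [alphaAux]
    rw [hstep, pow_zero, mul_one]
    refine (vecNorm_sub_le _ _).trans (add_le_add ?_ (hv' K))
    exact (hU K).vecNorm_sub_mulVec_le hr (hv K) (hv' (K + 1))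
  | succ l ih =>
    have hstep : alphaAux A B lam y (K + 1) (l + 1 + 1) = vvec A B lam y (K - (l + 1)) -
        Umat A B lam (K - (l + 1)) *ᵥ alphaAux A B lam y (K + 1) (l + 1) := by
      rw [show K - (l + 1) = K + 1 - (l + 1 + 1) by omega]
      rfl
    have hdiff : alphaAux A B lam y (K + 1) (l + 1 + 1) - alphaAux A B lam y K (l + 1) =
        -(Umat A B lam (K - (l + 1)) *ᵥ
          (alphaAux A B lam y (K + 1) (l + 1) - alphaAux A B lam y K l)) := by
      have hstep' : alphaAux A B lam y K (l + 1) = vvec A B lam y (K - (l + 1)) -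
          Umat A B lam (K - (l + 1)) *ᵥ alphaAux A B lam y K l := rfl
      rw [hstep, hstep', mulVec_sub]
      abel
    rw [hdiff, vecNorm_neg, pow_succ, ← mul_assoc, mul_comm _ r]
    exact (hU _).vecNorm_mulVec_le hr (ih (by omega))

lemma exists_tendsto_alphaEst {r V V' : ℝ} (hU : ∀ k, OpBound (Umat A B lam k) r)
    (hr0 : 0 ≤ r) (hr1 : r < 1) (hv : ∀ k, vecNorm (vvec A B lam y k) ≤ V)
    (hv' : ∀ k, vecNorm (vvec' A B lam y k) ≤ V') :
    ∃ αstar : ℕ → Fin N → ℝ,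
      (∀ k, Tendsto (fun K => alphaEst A B lam y k K) atTop (𝓝 (αstar k))) ∧
      ∀ k K, k ≤ K →
        vecNorm (alphaEst A B lam y k K - αstar k) ≤ (V + r * V' + V') / (1 - r) * r ^ (K - k) := by
  have hconv : ∀ k, ∃ a, Tendsto (fun m => alphaEst A B lam y k (m + k)) atTop (𝓝 a) ∧
      ∀ m, vecNorm (alphaEst A B lam y k (m + k) - a) ≤ (V + r * V' + V') * r ^ m / (1 - r) := by
    refine fun k => exists_tendsto_vecNorm_sub_le_of_le_geometric hr1 fun m => ?_
    have hidx : m + 1 + k - k = m + 1 := by omega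
    rw [alphaEst, alphaEst, hidx, Nat.add_sub_cancel, add_right_comm]
    exact vecNorm_alphaAux_succ_sub_le hU hr0 hv hv' m (m + k) (by omega)
  choose αstar hlim hbound using hconv
  refine ⟨αstar, fun k => (tendsto_add_atTop_iff_nat k).mp (hlim k), fun k K hkK => ?_⟩
  have := hbound k (K - k)
  rwa [Nat.sub_add_cancel hkK, mul_div_right_comm] at this

end Streaming

lemma lt_one_sub_of_eq_sub_sqrt {δ θ ε : ℝ} (hθ : θ < (1 - δ) / 2)
    (hε : ε = (1 + δ) / 2 - √((1 - δ) ^ 2 / 4 - θ ^ 2)) : θ < 1 - ε := by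
  have := Real.sqrt_nonneg ((1 - δ) ^ 2 / 4 - θ ^ 2)
  rw [hε]
  linarith

/-- `1 - ε` and `ε - δ` are the two roots of `t² - (1 - δ) t + θ²`. -/
lemma sq_eq_one_sub_mul_sub_of_eq_sub_sqrt {δ θ ε : ℝ} (hδ1 : δ < 1) (hθ0 : 0 ≤ θ)
    (hθ : θ < (1 - δ) / 2) (hε : ε = (1 + δ) / 2 - √((1 - δ) ^ 2 / 4 - θ ^ 2)) :
    θ ^ 2 = (1 - ε) * (ε - δ) := by
  have hs := Real.sq_sqrt (show 0 ≤ (1 - δ) ^ 2 / 4 - θ ^ 2 by nlinarith)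
  rw [hε]
  linear_combination hs

section Stability

variable {N : ℕ} {M : ℕ → ℕ} {A B : ∀ k : ℕ, Matrix (Fin (M k)) (Fin N) ℝ} {lam : ℕ → ℝ}
  {y : ∀ k : ℕ, Fin (M k) → ℝ} {κ δ θ ε My : ℝ}

lemma vecNorm_le_sqrt_mul_of_eq_sSup (hκ : 0 < κ)
    (hBdd : BddAbove (Set.range fun k : ℕ =>
      Real.sqrt ((∑ i, y k i ^ 2) + ∑ i, y (k + 1) i ^ 2) / Real.sqrt κ))
    (hMy : My = sSup (Set.range fun k : ℕ =>
      Real.sqrt ((∑ i, y k i ^ 2) + ∑ i, y (k + 1) i ^ 2) / Real.sqrt κ)) (k : ℕ) :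
    vecNorm (y k) ≤ √κ * My := by
  have hk := hMy ▸ le_csSup hBdd ⟨k, rfl⟩
  rw [div_le_iff₀ (Real.sqrt_pos.mpr hκ), mul_comm] at hk
  refine le_trans (Real.sqrt_le_sqrt ?_) hk
  exact le_add_of_nonneg_right (Finset.sum_nonneg fun i _ => sq_nonneg _)

lemma opBound_transpose_of_stability (hκ : 0 < κ) (hδ1 : δ ≤ 1) (hlam : ∀ k, 0 ≤ lam k)
    (hD : ∀ k, matSpectralNorm (Dmat A B lam k - κ • (1 : Matrix (Fin N) (Fin N) ℝ)) ≤ κ * δ)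
    (k : ℕ) : OpBound (A k)ᵀ √(2 * κ) ∧ OpBound (B (k + 1))ᵀ √(2 * κ) := by
  have hDk := opBound_of_matSpectralNorm_le (hD k)
  obtain ⟨hA, hB⟩ := opBound_of_dotProduct_Dmat_mulVec_le A B lam (c := 2 * κ) (hlam k) fun x =>
    (dotProduct_mulVec_le_of_opBound_sub_smul_one hDk x).trans
      (mul_le_mul_of_nonneg_right (by nlinarith) (sq_nonneg _))
  exact ⟨hA.transpose (Real.sqrt_nonneg _), hB.transpose (Real.sqrt_nonneg _)⟩

lemma coercive_Qmat_of_stability (hκ : 0 < κ) (hθ0 : 0 ≤ θ) (hε : 0 < 1 - ε)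
    (hsq : θ ^ 2 = (1 - ε) * (ε - δ))
    (hD : ∀ k, matSpectralNorm (Dmat A B lam k - κ • (1 : Matrix (Fin N) (Fin N) ℝ)) ≤ κ * δ)
    (hE : ∀ k, matSpectralNorm (Emat A B k) ≤ κ * θ) (k : ℕ) :
    Coercive (Qmat A B lam k) (κ * (1 - ε)) := by
  refine coercive_Qmat A B lam (d := κ - κ * δ) (e := κ * θ)
    (fun k => coercive_of_opBound_sub_smul_one (opBound_of_matSpectralNorm_le (hD k)))
    (fun k => (opBound_of_matSpectralNorm_le (hE k)).transpose (by positivity))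
    (by positivity) ?_ k
  have hSchur : (κ * (1 - ε))⁻¹ * (κ * θ) ^ 2 = κ * (ε - δ) := by
    rw [mul_pow, hsq]
    field_simp
  linarith

lemma vecNorm_wvec_le_of_stability (hκ : 0 < κ) (hδ1 : δ ≤ 1) (hlam : ∀ k, 0 ≤ lam k)
    (hD : ∀ k, matSpectralNorm (Dmat A B lam k - κ • (1 : Matrix (Fin N) (Fin N) ℝ)) ≤ κ * δ)
    (hy : ∀ k, vecNorm (y k) ≤ √κ * My) (k : ℕ) :
    vecNorm (wvec A B y k) ≤ 2 * √2 * (κ * My) ∧ vecNorm (wvec' A y k) ≤ √2 * (κ * My) := by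
  obtain ⟨hA, hB⟩ := opBound_transpose_of_stability hκ hδ1 hlam hD k
  have hscale : √(2 * κ) * (√κ * My) = √2 * (κ * My) := by
    rw [Real.sqrt_mul zero_le_two]
    linear_combination √2 * My * Real.mul_self_sqrt hκ.le
  have hAy := hA.vecNorm_mulVec_le (Real.sqrt_nonneg _) (hy k)
  have hBy := hB.vecNorm_mulVec_le (Real.sqrt_nonneg _) (hy (k + 1))
  refine ⟨(vecNorm_add_le _ _).trans ?_, hAy.trans_eq hscale⟩
  linarith

lemma vecNorm_vvec_le_of_stability (hκ : 0 < κ) (hδ1 : δ ≤ 1) (hθ0 : 0 ≤ θ) (hθε : θ < 1 - ε)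
    (hsq : θ ^ 2 = (1 - ε) * (ε - δ)) (hlam : ∀ k, 0 ≤ lam k)
    (hD : ∀ k, matSpectralNorm (Dmat A B lam k - κ • (1 : Matrix (Fin N) (Fin N) ℝ)) ≤ κ * δ)
    (hE : ∀ k, matSpectralNorm (Emat A B k) ≤ κ * θ) (hy : ∀ k, vecNorm (y k) ≤ √κ * My)
    (k : ℕ) : vecNorm (vvec A B lam y k) ≤ 2 * √2 / (1 - ε - θ) * My := by
  have hε : 0 < 1 - ε := by linarith
  have hMy : 0 ≤ My := nonneg_of_mul_nonneg_right ((vecNorm_nonneg _).trans (hy 0))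
    (Real.sqrt_pos.mpr hκ)
  have hεθ : 0 < 1 - ε - θ := by linarith
  refine vecNorm_vvec_le (q := (κ * (1 - ε))⁻¹) (e := κ * θ) (W := 2 * √2 * (κ * My))
    (fun k => (coercive_Qmat_of_stability hκ hθ0 hε hsq hD hE k).opBound_inv (by positivity))
    (by positivity) (fun k => opBound_of_matSpectralNorm_le (hE k)) (by positivity)
    (fun k => (vecNorm_wvec_le_of_stability hκ hδ1 hlam hD hy k).1) (le_of_eq ?_)
    (by positivity) k
  field_simp
  ring

lemma vecNorm_vvec'_le_of_stability {lam0 : ℝ} (hκ : 0 < κ) (hδ1 : δ ≤ 1) (hθ0 : 0 ≤ θ)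
    (hθε : θ < 1 - ε) (hsq : θ ^ 2 = (1 - ε) * (ε - δ)) (hlam0 : 0 < lam0)
    (hlam : ∀ k, 0 ≤ lam k)
    (hD : ∀ k, matSpectralNorm (Dmat A B lam k - κ • (1 : Matrix (Fin N) (Fin N) ℝ)) ≤ κ * δ)
    (hE : ∀ k, matSpectralNorm (Emat A B k) ≤ κ * θ)
    (hQ' : ∀ k, κ * lam0 ≤ eigMin (Qmat' A B lam k)) (hy : ∀ k, vecNorm (y k) ≤ √κ * My)
    (k : ℕ) :
    vecNorm (vvec' A B lam y k) ≤ (√2 + θ * (2 * √2 / (1 - ε - θ))) / lam0 * My := by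
  refine (vecNorm_vvec'_le (q := (κ * lam0)⁻¹) (e := κ * θ) (W := √2 * (κ * My))
    (fun k => (coercive_of_le_eigMin (hQ' k)).opBound_inv (by positivity)) (by positivity)
    (fun k => opBound_of_matSpectralNorm_le (hE k)) (by positivity)
    (fun k => (vecNorm_wvec_le_of_stability hκ hδ1 hlam hD hy k).2)
    (vecNorm_vvec_le_of_stability hκ hδ1 hθ0 hθε hsq hlam hD hE hy) k).trans_eq ?_
  field_simp

lemma opBound_Umat_of_stability (hκ : 0 < κ) (hθ0 : 0 ≤ θ) (hθε : θ < 1 - ε)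
    (hsq : θ ^ 2 = (1 - ε) * (ε - δ))
    (hD : ∀ k, matSpectralNorm (Dmat A B lam k - κ • (1 : Matrix (Fin N) (Fin N) ℝ)) ≤ κ * δ)
    (hE : ∀ k, matSpectralNorm (Emat A B k) ≤ κ * θ) (k : ℕ) :
    OpBound (Umat A B lam k) (θ / (1 - ε)) := by
  have hε : 0 < 1 - ε := by linarith
  have hU := ((coercive_Qmat_of_stability hκ hθ0 hε hsq hD hE k).opBound_inv (by positivity)).mul
    ((opBound_of_matSpectralNorm_le (hE k)).transpose (by positivity)) (by positivity)
  rw [Umat]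
  convert hU using 1
  field_simp

end Stability

theorem streaming_estimates_converge_exponentially_general
    (δ θ lam0 : ℝ) (hδ1 : δ < 1)
    (hθ0 : 0 ≤ θ) (hθ : θ < (1 - δ) / 2) (hlam0 : 0 < lam0)
    (ε : ℝ) (hε : ε = (1 + δ) / 2 - Real.sqrt ((1 - δ) ^ 2 / 4 - θ ^ 2)) :
    ε < 1 ∧ θ / (1 - ε) < 1 ∧
    ∃ C : ℝ, 0 < C ∧
      ∀ (N : ℕ), 1 ≤ N → ∀ (M : ℕ → ℕ)
        (A B : ∀ k : ℕ, Matrix (Fin (M k)) (Fin N) ℝ)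
        (y : ∀ k : ℕ, Fin (M k) → ℝ) (lam : ℕ → ℝ) (κ My : ℝ),
        (∀ k, 0 ≤ lam k) → 1 ≤ κ →
        (∀ k, matSpectralNorm (Dmat A B lam k - κ • (1 : Matrix (Fin N) (Fin N) ℝ)) ≤ κ * δ) →
        (∀ k, matSpectralNorm (Emat A B k) ≤ κ * θ) →
        (∀ k, κ * lam0 ≤ eigMin (Qmat' A B lam k)) →
        BddAbove (Set.range fun k : ℕ =>
          Real.sqrt ((∑ i, y k i ^ 2) + ∑ i, y (k + 1) i ^ 2) / Real.sqrt κ) →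
        My = sSup (Set.range fun k : ℕ =>
          Real.sqrt ((∑ i, y k i ^ 2) + ∑ i, y (k + 1) i ^ 2) / Real.sqrt κ) →
        ∃ αstar : ℕ → Fin N → ℝ,
          (∀ k : ℕ, Filter.Tendsto (fun K : ℕ => alphaEst A B lam y k K)
            Filter.atTop (nhds (αstar k))) ∧
          ∀ k K : ℕ, k ≤ K →
            vecNorm (alphaEst A B lam y k K - αstar k) ≤
              C * My * (θ / (1 - ε)) ^ (K - k) := by
  have hθε := lt_one_sub_of_eq_sub_sqrt hθ hε
  have hsq := sq_eq_one_sub_mul_sub_of_eq_sub_sqrt hδ1 hθ0 hθ hε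
  have hr0 : 0 ≤ θ / (1 - ε) := div_nonneg hθ0 (by linarith)
  have hr1 : θ / (1 - ε) < 1 := (div_lt_one (by linarith)).mpr hθε
  set r := θ / (1 - ε)
  set V := 2 * √2 / (1 - ε - θ)
  set V' := (√2 + θ * V) / lam0
  have hr : 0 < 1 - r := by linarith
  refine ⟨by linarith, hr1, (V + r * V' + V') / (1 - r), by positivity, ?_⟩
  intro N _ M A B y lam κ My hlam hκ hD hE hQ' hBdd hMy
  have hκ0 : 0 < κ := by linarith
  have hy := vecNorm_le_sqrt_mul_of_eq_sSup hκ0 hBdd hMy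
  obtain ⟨αstar, hlim, hbound⟩ := exists_tendsto_alphaEst
    (opBound_Umat_of_stability hκ0 hθ0 hθε hsq hD hE) hr0 hr1
    (vecNorm_vvec_le_of_stability hκ0 hδ1.le hθ0 hθε hsq hlam hD hE hy)
    (vecNorm_vvec'_le_of_stability hκ0 hδ1.le hθ0 hθε hsq hlam0 hlam hD hE hQ' hy)
  exact ⟨αstar, hlim, fun k K hkK => (hbound k K hkK).trans_eq (by ring)⟩

/-- exponential convergence of the streaming least-squares estimates.
For every `δ ∈ [0,1)`, `θ ∈ [0,(1−δ)/2)`, `λ > 0`, with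
`ε = (1+δ)/2 − √((1−δ)²/4 − θ²)` (so `ε < 1` and `θ/(1−ε) < 1`), there is a constant
`C > 0` depending only on `δ, θ, λ` such that for every streaming least-squares setup
satisfying the stability hypotheses with parameters `κ, δ, θ, λ` and with
`M_y = κ^{−1/2}·sup_k ‖(y_k, y_{k+1})‖₂` finite, the estimates `α_{k|K}` converge as
`K → ∞` to limits `α*_k`, with `‖α_{k|K} − α*_k‖₂ ≤ C·M_y·(θ/(1−ε))^{K−k}`. -/
theorem streaming_estimates_converge_exponentially
    (δ θ lam0 : ℝ) (hδ0 : 0 ≤ δ) (hδ1 : δ < 1)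
    (hθ0 : 0 ≤ θ) (hθ : θ < (1 - δ) / 2) (hlam0 : 0 < lam0)
    (ε : ℝ) (hε : ε = (1 + δ) / 2 - Real.sqrt ((1 - δ) ^ 2 / 4 - θ ^ 2)) :
    ε < 1 ∧ θ / (1 - ε) < 1 ∧
    ∃ C : ℝ, 0 < C ∧
      ∀ (N : ℕ), 1 ≤ N → ∀ (M : ℕ → ℕ)
        (A B : ∀ k : ℕ, Matrix (Fin (M k)) (Fin N) ℝ)
        (y : ∀ k : ℕ, Fin (M k) → ℝ) (lam : ℕ → ℝ) (κ My : ℝ),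
        (∀ k, 0 ≤ lam k) → 1 ≤ κ →
        (∀ k, matSpectralNorm (Dmat A B lam k - κ • (1 : Matrix (Fin N) (Fin N) ℝ)) ≤ κ * δ) →
        (∀ k, matSpectralNorm (Emat A B k) ≤ κ * θ) →
        (∀ k, κ * lam0 ≤ eigMin (Qmat' A B lam k)) →
        BddAbove (Set.range fun k : ℕ =>
          Real.sqrt ((∑ i, y k i ^ 2) + ∑ i, y (k + 1) i ^ 2) / Real.sqrt κ) →
        My = sSup (Set.range fun k : ℕ =>
          Real.sqrt ((∑ i, y k i ^ 2) + ∑ i, y (k + 1) i ^ 2) / Real.sqrt κ) →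
        ∃ αstar : ℕ → Fin N → ℝ,
          (∀ k : ℕ, Filter.Tendsto (fun K : ℕ => alphaEst A B lam y k K)
            Filter.atTop (nhds (αstar k))) ∧
          ∀ k K : ℕ, k ≤ K →
            vecNorm (alphaEst A B lam y k K - αstar k) ≤
              C * My * (θ / (1 - ε)) ^ (K - k) :=
  streaming_estimates_converge_exponentially_general δ θ lam0 hδ1 hθ0 hθ hlam0 ε hε
end

section
/- Let δ ∈ [0,1) and θ ∈ [0,(1−δ)/2], and define the sequence (ε_k)_{k≥0} by ε_0 = δ and ε_{k+1} = δ + θ²/(1−ε_k). Set ε = (1+δ)/2 − √((1−δ)²/4 − θ²). Then the sequence (ε_k) is monotonically nondecreasing, satisfies ε_k ≤ ε < 1 for all k, and converges to ε as k → ∞. -/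
/-! The map `f x = δ + c / (1 - x)` with `c = θ²` satisfies `(x - δ)(1 - x) - c = (x - ε)(ε' - x)`,
where `ε ≤ ε'` are the two fixed points of `f`. Hence on `(-∞, ε]` the map `f` stays below `ε`
and lies above the identity, so the orbit of `δ ≤ ε` increases, is bounded by `ε`, and converges to a
fixed point of `f` in `(-∞, ε]`, which can only be `ε`. -/

open Set Filter Topology Function

section Iterate

variable {α : Type*} {f : α → α} {x₀ b : α}

theorem monotone_iterate_of_le_map_of_mapsTo [Preorder α] (hle : ∀ x ≤ b, x ≤ f x)
    (hmaps : MapsTo f (Iic b) (Iic b)) (hx₀ : x₀ ≤ b) : Monotone fun n => f^[n] x₀ :=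
  monotone_nat_of_le_succ fun n => by
    rw [iterate_succ_apply']
    exact hle _ (hmaps.iterate n hx₀)

variable [ConditionallyCompleteLinearOrder α] [TopologicalSpace α] [OrderTopology α]

theorem tendsto_iterate_of_le_map_of_mapsTo (hle : ∀ x ≤ b, x ≤ f x)
    (hmaps : MapsTo f (Iic b) (Iic b)) (hcont : ∀ x ≤ b, ContinuousAt f x)
    (hfix : ∀ x ≤ b, IsFixedPt f x → x = b) (hx₀ : x₀ ≤ b) :
    Tendsto (fun n => f^[n] x₀) atTop (𝓝 b) := by
  have hbdd : ∀ n, f^[n] x₀ ≤ b := fun n => hmaps.iterate n hx₀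
  have hlim := tendsto_atTop_ciSup (monotone_iterate_of_le_map_of_mapsTo hle hmaps hx₀)
    ⟨b, forall_mem_range.2 hbdd⟩
  have hLb : ⨆ n, f^[n] x₀ ≤ b := ciSup_le hbdd
  rwa [← hfix _ hLb (isFixedPt_of_tendsto_iterate hlim (hcont _ hLb))]

end Iterate

namespace EpsRecursion

variable {δ c x : ℝ}

noncomputable def recMap (δ c x : ℝ) : ℝ := δ + c / (1 - x)

noncomputable def fixedPoint (δ c : ℝ) : ℝ := (1 + δ) / 2 - √((1 - δ) ^ 2 / 4 - c)

theorem sub_mul_sub_sub_eq (hc : c ≤ (1 - δ) ^ 2 / 4) (x : ℝ) :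
    (x - δ) * (1 - x) - c =
      (x - fixedPoint δ c) * ((1 + δ) / 2 + √((1 - δ) ^ 2 / 4 - c) - x) := by
  have hs := Real.sq_sqrt (sub_nonneg.2 hc)
  unfold fixedPoint
  linear_combination -hs

theorem fixedPoint_lt_one (hδ : δ < 1) : fixedPoint δ c < 1 := by
  have := Real.sqrt_nonneg ((1 - δ) ^ 2 / 4 - c)
  unfold fixedPoint
  linarith

theorem le_fixedPoint (hc₀ : 0 ≤ c) (hδ : δ < 1) : δ ≤ fixedPoint δ c := by
  have : √((1 - δ) ^ 2 / 4 - c) ≤ (1 - δ) / 2 := by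
    rw [Real.sqrt_le_left (by linarith)]
    linarith
  unfold fixedPoint
  linarith

theorem le_recMap_iff (hx : x < 1) : x ≤ recMap δ c x ↔ (x - δ) * (1 - x) ≤ c := by
  rw [recMap, ← sub_le_iff_le_add', le_div_iff₀ (sub_pos.2 hx)]

theorem recMap_eq_iff (hx : x < 1) : recMap δ c x = x ↔ (x - δ) * (1 - x) = c := by
  rw [recMap, ← eq_sub_iff_add_eq', div_eq_iff (sub_pos.2 hx).ne', eq_comm]

theorem recMap_fixedPoint (hc : c ≤ (1 - δ) ^ 2 / 4) (hδ : δ < 1) :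
    recMap δ c (fixedPoint δ c) = fixedPoint δ c := by
  rw [recMap_eq_iff (fixedPoint_lt_one hδ), ← sub_eq_zero, sub_mul_sub_sub_eq hc, sub_self,
    zero_mul]

theorem le_recMap (hc : c ≤ (1 - δ) ^ 2 / 4) (hδ : δ < 1) (hx : x ≤ fixedPoint δ c) :
    x ≤ recMap δ c x := by
  rw [le_recMap_iff (hx.trans_lt (fixedPoint_lt_one hδ)), ← sub_nonpos, sub_mul_sub_sub_eq hc]
  have := Real.sqrt_nonneg ((1 - δ) ^ 2 / 4 - c)
  unfold fixedPoint at hx ⊢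
  exact mul_nonpos_of_nonpos_of_nonneg (by linarith) (by linarith)

theorem recMap_le_fixedPoint (hc₀ : 0 ≤ c) (hc : c ≤ (1 - δ) ^ 2 / 4) (hδ : δ < 1)
    (hx : x ≤ fixedPoint δ c) : recMap δ c x ≤ fixedPoint δ c := by
  have hε : fixedPoint δ c < 1 := fixedPoint_lt_one hδ
  calc recMap δ c x ≤ recMap δ c (fixedPoint δ c) := by unfold recMap; gcongr
    _ = fixedPoint δ c := recMap_fixedPoint hc hδ

theorem eq_fixedPoint_of_isFixedPt (hc : c ≤ (1 - δ) ^ 2 / 4) (hδ : δ < 1)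
    (hx : x ≤ fixedPoint δ c) (hfix : IsFixedPt (recMap δ c) x) : x = fixedPoint δ c := by
  rw [IsFixedPt, recMap_eq_iff (hx.trans_lt (fixedPoint_lt_one hδ)), ← sub_eq_zero,
    sub_mul_sub_sub_eq hc, mul_eq_zero, sub_eq_zero, sub_eq_zero] at hfix
  have := Real.sqrt_nonneg ((1 - δ) ^ 2 / 4 - c)
  rcases hfix with h | h
  · exact h
  · unfold fixedPoint at hx ⊢
    linarith

theorem continuousAt_recMap (hx : x ≠ 1) : ContinuousAt (recMap δ c) x :=
  continuousAt_const.add (continuousAt_const.div (continuousAt_const.sub continuousAt_id)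
    (sub_ne_zero.2 hx.symm))

end EpsRecursion

open EpsRecursion in
theorem eps_recursion_converges_general (δ θ : ℝ) (hδ1 : δ < 1)
    (hθ0 : 0 ≤ θ) (hθ : θ ≤ (1 - δ) / 2)
    (e : ℕ → ℝ) (he0 : e 0 = δ) (heS : ∀ k, e (k + 1) = δ + θ ^ 2 / (1 - e k))
    (ε : ℝ) (hε : ε = (1 + δ) / 2 - Real.sqrt ((1 - δ) ^ 2 / 4 - θ ^ 2)) :
    Monotone e ∧ (∀ k, e k ≤ ε) ∧ ε < 1 ∧
      Filter.Tendsto e Filter.atTop (nhds ε) := by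
  have hc₀ : 0 ≤ θ ^ 2 := sq_nonneg θ
  have hc : θ ^ 2 ≤ (1 - δ) ^ 2 / 4 := by nlinarith
  have hε : ε = fixedPoint δ (θ ^ 2) := hε
  have he : e = fun n => (recMap δ (θ ^ 2))^[n] δ := by
    funext n
    induction n with
    | zero => exact he0
    | succ n ih => rw [heS, iterate_succ_apply', ih, recMap]
  have hle : ∀ x ≤ ε, x ≤ recMap δ (θ ^ 2) x := fun x hx => le_recMap hc hδ1 (hε ▸ hx)
  have hmaps : MapsTo (recMap δ (θ ^ 2)) (Iic ε) (Iic ε) := fun x hx =>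
    hε ▸ recMap_le_fixedPoint hc₀ hc hδ1 (hε ▸ hx)
  have hε1 : ε < 1 := hε ▸ fixedPoint_lt_one hδ1
  have hδε : δ ≤ ε := hε ▸ le_fixedPoint hc₀ hδ1
  subst he
  refine ⟨monotone_iterate_of_le_map_of_mapsTo hle hmaps hδε, fun n => hmaps.iterate n hδε,
    hε1, tendsto_iterate_of_le_map_of_mapsTo hle hmaps ?_ ?_ hδε⟩
  · exact fun x hx => continuousAt_recMap (hx.trans_lt hε1).ne
  · exact fun x hx hfix => hε ▸ eq_fixedPoint_of_isFixedPt hc hδ1 (hε ▸ hx) hfix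

/-- the recursion `ε₀ = δ`, `ε_{k+1} = δ + θ²/(1 − ε_k)` is monotonically
nondecreasing, bounded by `ε = (1+δ)/2 − √((1−δ)²/4 − θ²) < 1`, and converges to `ε`. -/
theorem eps_recursion_converges (δ θ : ℝ) (hδ0 : 0 ≤ δ) (hδ1 : δ < 1)
    (hθ0 : 0 ≤ θ) (hθ : θ ≤ (1 - δ) / 2)
    (e : ℕ → ℝ) (he0 : e 0 = δ) (heS : ∀ k, e (k + 1) = δ + θ ^ 2 / (1 - e k))
    (ε : ℝ) (hε : ε = (1 + δ) / 2 - Real.sqrt ((1 - δ) ^ 2 / 4 - θ ^ 2)) :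
    Monotone e ∧ (∀ k, e k ≤ ε) ∧ ε < 1 ∧
      Filter.Tendsto e Filter.atTop (nhds ε) :=
  eps_recursion_converges_general δ θ hδ1 hθ0 hθ e he0 heS ε hε
end

section
/- Let 0 < η ≤ 1/2 and let g : ℝ → ℝ be a measurable function satisfying: g(t) = 0 for t ∉ [−η, 1+η]; Σ_{k∈ℤ} g(t−k)² = 1 for all t ∈ ℝ; and g(1−t) = g(t) for all t ∈ ℝ. For k ∈ ℤ and integer n ≥ 1 define ψ_{k,n}(t) = g(t−k)·√2·cos(π(n−1/2)(t−k)). Then each ψ_{k,n} belongs to L²(ℝ) and the family {ψ_{k,n} : k ∈ ℤ, n ≥ 1} is orthonormal in L²(ℝ): ∫ψ_{k,n}(t)ψ_{k',n'}(t)dt = 1 if (k,n) = (k',n') and 0 otherwise. -/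
/-!
Translating by `k` reduces every inner product to `∫ g(s) φₙ(s) g(s - d) φₙ'(s - d) ds` with
`d = k' - k ∈ ℤ` and `φₙ(s) = √2 cos(π(n - 1/2)s)`.
For `|d| ≥ 2` the supports meet in at most one point because `η ≤ 1/2`.
For `d = 1` the integrand, recentred at `1`, is odd: `g(1 - s) = g(s)`, and `φₙ` is odd about `1`
since `cos(π(n - 1/2)) = 0`.
For `d = 0`, `2 cos a cos b = cos(a - b) + cos(a + b)` leaves `∫ g² cos(mπs)` with `m = n - n'` and
`m = n + n' - 1 ≠ 0`. For odd `m` the reflection `s ↦ 1 - s` flips its sign; for even `m` the cosine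
is `1`-periodic, so periodizing `g²` over `ℤ` and using `Σₖ g(s - k)² = 1` leaves `∫₀¹ cos(mπs)`.
-/

open MeasureTheory Real

theorem intervalIntegral_cos_two_mul_int_mul_pi (j : ℤ) :
    ∫ x in (0 : ℝ)..1, cos (2 * j * π * x) = if j = 0 then 1 else 0 := by
  split_ifs with hj
  · simp [hj]
  · have hne : 2 * (j : ℝ) * π ≠ 0 := by positivity
    rw [intervalIntegral.integral_comp_mul_left (fun x => cos x) hne, integral_cos, mul_one,
      mul_zero, show 2 * (j : ℝ) * π = ((2 * j : ℤ) : ℝ) * π by push_cast; ring, sin_int_mul_pi]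
    simp

theorem integral_mul_periodic_eq_intervalIntegral_tsum {f c : ℝ → ℝ} {C : ℝ}
    (hf : Integrable f) (hc : AEStronglyMeasurable c) (hcC : ∀ x, |c x| ≤ C)
    (hper : Function.Periodic c 1) :
    ∫ x, f x * c x = ∫ x in 0..1, (∑' n : ℤ, f (x + n)) * c x := by
  have hc_int : ∀ n : ℤ, ∀ x, c (x + n) = c x := fun n x => by simpa using hper.int_mul n x
  have hsum_shift : HasSum (fun n : ℤ => ∫ x in 0..1, f (x + n) * c x) (∫ x, f x * c x) := by
    simpa only [hc_int] using
      (hf.mul_bdd hc (ae_of_all _ hcC)).hasSum_intervalIntegral_comp_add_int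
  have hsum_norm : Summable fun n : ℤ => ∫ x in Set.Ioc 0 1, ‖f (x + n) * c x‖ := by
    have hdom := (hf.norm.const_mul C).hasSum_intervalIntegral_comp_add_int.summable
    simp only [intervalIntegral.integral_of_le zero_le_one] at hdom
    refine hdom.of_nonneg_of_le (fun n => integral_nonneg fun x => norm_nonneg _)
      fun n => integral_mono_of_nonneg (ae_of_all _ fun x => norm_nonneg _)
        ((hf.comp_add_right (n : ℝ)).norm.const_mul C).integrableOn (ae_of_all _ fun x => ?_)
    simp only [norm_mul, Real.norm_eq_abs]
    rw [mul_comm]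
    exact mul_le_mul_of_nonneg_right (hcC x) (abs_nonneg _)
  have hsum_tsum := hasSum_integral_of_summable_integral_norm
    (F := fun (n : ℤ) x => f (x + n) * c x) (μ := volume.restrict (Set.Ioc 0 1))
    (fun n => ((hf.comp_add_right (n : ℝ)).mul_bdd hc (ae_of_all _ hcC)).integrableOn) hsum_norm
  simp only [← intervalIntegral.integral_of_le zero_le_one, tsum_mul_right] at hsum_tsum
  exact hsum_shift.unique hsum_tsum

theorem integral_mul_cos_int_mul_pi {f : ℝ → ℝ} (hf : Integrable f)
    (hpart : ∀ t, ∑' k : ℤ, f (t - k) = 1) (hsym : ∀ t, f (1 - t) = f t) (m : ℤ) :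
    ∫ s, f s * cos (m * π * s) = if m = 0 then 1 else 0 := by
  obtain ⟨j, rfl | rfl⟩ := Int.even_or_odd' m
  · have hper : Function.Periodic (fun s => cos (2 * j * π * s)) 1 := fun s => by
      show cos (2 * j * π * (s + 1)) = cos (2 * j * π * s)
      rw [← cos_add_int_mul_two_pi (2 * j * π * s) j]
      congr 1
      ring
    have hpart' : ∀ x, ∑' n : ℤ, f (x + n) = 1 := fun x => by
      rw [← hpart x, ← (Equiv.neg ℤ).tsum_eq]
      simp [sub_eq_add_neg]
    push_cast
    rw [integral_mul_periodic_eq_intervalIntegral_tsum hf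
      (by fun_prop : Continuous _).aestronglyMeasurable (fun s => abs_cos_le_one _) hper]
    simp only [hpart', one_mul, intervalIntegral_cos_two_mul_int_mul_pi]
    simp
  · have hodd : ∀ s, f (1 - s) * cos (((2 * j + 1 : ℤ) : ℝ) * π * (1 - s))
        = -(f s * cos (((2 * j + 1 : ℤ) : ℝ) * π * s)) := fun s => by
      rw [hsym, mul_sub, mul_one, cos_int_mul_pi_sub, Odd.neg_one_zpow ⟨j, rfl⟩]
      ring
    have hrefl :=
      integral_sub_left_eq_self (fun s => f s * cos (((2 * j + 1 : ℤ) : ℝ) * π * s)) volume 1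
    simp only [hodd, integral_neg] at hrefl
    rw [if_neg (by omega)]
    linarith

theorem memLp_of_abs_le_of_forall_notMem_Icc {f : ℝ → ℝ} {C a b : ℝ} (p : ENNReal)
    (hf : AEStronglyMeasurable f) (hfC : ∀ t, |f t| ≤ C) (hf0 : ∀ t ∉ Set.Icc a b, f t = 0) :
    MemLp f p volume := by
  have hind : (Set.Icc a b).indicator f = f := Set.indicator_eq_self.2 fun t ht => by
    by_contra hmem
    exact ht (hf0 t hmem)
  rw [← hind, memLp_indicator_iff_restrict measurableSet_Icc]
  exact MemLp.of_bound hf.restrict C (ae_of_all _ hfC)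

theorem integral_mul_eq_zero_of_forall_notMem_Icc {f h : ℝ → ℝ} {a b c d : ℝ}
    (hf : ∀ t ∉ Set.Icc a b, f t = 0) (hh : ∀ t ∉ Set.Icc c d, h t = 0) (hbc : b ≤ c) :
    ∫ t, f t * h t = 0 := by
  refine integral_eq_zero_of_ae
    (ae_iff.2 (measure_mono_null (t := Set.Icc c b) (fun t ht => ?_) ?_))
  · have hft : f t ≠ 0 := left_ne_zero_of_mul ht
    have hht : h t ≠ 0 := right_ne_zero_of_mul ht
    exact ⟨(not_not.1 (mt (hh t) hht)).1, (not_not.1 (mt (hf t) hft)).2⟩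
  · simp [Real.volume_Icc, hbc]

theorem integral_mul_comp_sub_comm (f h : ℝ → ℝ) (d : ℝ) :
    ∫ s, f s * h (s - d) = ∫ s, h s * f (s + d) := by
  rw [← integral_add_right_eq_self (fun s => f s * h (s - d)) d]
  simp only [add_sub_cancel_right, mul_comm]

theorem cos_pi_mul_nat_sub_half_mul_one_sub (n : ℕ) (s : ℝ) :
    cos (π * (n - 1 / 2) * (1 - s)) = -cos (π * (n - 1 / 2) * (1 + s)) := by
  have h0 : cos (π * (n - 1 / 2)) = 0 := cos_eq_zero_iff.2 ⟨n - 1, by push_cast; ring⟩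
  rw [mul_sub, mul_add, mul_one, cos_sub, cos_add, h0]
  ring

noncomputable def lotAtom (g : ℝ → ℝ) (n : ℕ) (s : ℝ) : ℝ :=
  g s * (√2 * cos (π * (n - 1 / 2) * s))

section LotAtom

variable {g : ℝ → ℝ}

theorem abs_le_one_of_tsum_sq_eq_one (hpart : ∀ t : ℝ, ∑' k : ℤ, g (t - k) ^ 2 = 1) (t : ℝ) :
    |g t| ≤ 1 := by
  have hsum : Summable fun k : ℤ => g (t - k) ^ 2 := by
    by_contra h
    simpa [tsum_eq_zero_of_not_summable h] using hpart t
  rw [← sq_le_one_iff_abs_le_one, ← hpart t]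
  simpa using hsum.le_tsum 0 fun k _ => sq_nonneg _

theorem lotAtom_eq_zero_of_notMem (n : ℕ) {η : ℝ} (hsupp : ∀ t ∉ Set.Icc (-η) (1 + η), g t = 0)
    {s : ℝ} (hs : s ∉ Set.Icc (-η) (1 + η)) : lotAtom g n s = 0 := by
  rw [lotAtom, hsupp s hs, zero_mul]

theorem memLp_lotAtom (hg : MemLp g 2 volume) (n : ℕ) : MemLp (lotAtom g n) 2 volume := by
  have hcos : MemLp (fun s : ℝ => √2 * cos (π * (n - 1 / 2) * s)) ⊤ volume := by
    refine memLp_top_of_bound (by fun_prop : Continuous _).aestronglyMeasurable (√2)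
      (ae_of_all _ fun s => ?_)
    rw [norm_mul, Real.norm_of_nonneg (sqrt_nonneg 2)]
    exact mul_le_of_le_one_right (sqrt_nonneg 2) (abs_cos_le_one _)
  exact hcos.mul' hg

theorem lotAtom_mul_lotAtom (n n' : ℕ) (s : ℝ) :
    lotAtom g n s * lotAtom g n' s
      = g s ^ 2 * cos (((n - n' : ℤ) : ℝ) * π * s)
        + g s ^ 2 * cos (((n + n' - 1 : ℤ) : ℝ) * π * s) := by
  have hsub : ((n - n' : ℤ) : ℝ) * π * s = π * (n - 1 / 2) * s - π * (n' - 1 / 2) * s := by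
    push_cast; ring
  have hadd : ((n + n' - 1 : ℤ) : ℝ) * π * s = π * (n - 1 / 2) * s + π * (n' - 1 / 2) * s := by
    push_cast; ring
  rw [hsub, hadd, cos_sub, cos_add, lotAtom, lotAtom]
  linear_combination (g s ^ 2 * cos (π * (n - 1 / 2) * s) * cos (π * (n' - 1 / 2) * s))
    * Real.mul_self_sqrt (zero_le_two : (0 : ℝ) ≤ 2)

theorem integral_lotAtom_mul_lotAtom (hg : MemLp g 2 volume)
    (hpart : ∀ t : ℝ, ∑' k : ℤ, g (t - k) ^ 2 = 1) (hsym : ∀ t : ℝ, g (1 - t) = g t)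
    {n n' : ℕ} (hn : 1 ≤ n) (hn' : 1 ≤ n') :
    ∫ s, lotAtom g n s * lotAtom g n' s = if n = n' then 1 else 0 := by
  have hint : ∀ m : ℤ, Integrable fun s => g s ^ 2 * cos (m * π * s) := fun m =>
    hg.integrable_sq.mul_bdd (by fun_prop : Continuous _).aestronglyMeasurable
      (ae_of_all _ fun s => abs_cos_le_one _)
  have hsym2 : ∀ t, g (1 - t) ^ 2 = g t ^ 2 := fun t => by rw [hsym]
  simp only [lotAtom_mul_lotAtom]
  rw [integral_add (hint _) (hint _), integral_mul_cos_int_mul_pi hg.integrable_sq hpart hsym2,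
    integral_mul_cos_int_mul_pi hg.integrable_sq hpart hsym2,
    if_neg (show (n + n' - 1 : ℤ) ≠ 0 by omega)]
  simp [sub_eq_zero]

theorem integral_lotAtom_mul_lotAtom_sub_one (hsym : ∀ t : ℝ, g (1 - t) = g t) (n n' : ℕ) :
    ∫ s, lotAtom g n s * lotAtom g n' (s - 1) = 0 := by
  set Φ : ℝ → ℝ := fun u => lotAtom g n (1 + u) * lotAtom g n' u with hΦ
  have hodd : ∀ u, Φ (-u) = -Φ u := fun u => by
    have hg_neg : g (-u) = g (1 + u) := by rw [← hsym (1 + u)]; ring_nf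
    simp only [hΦ, lotAtom, ← sub_eq_add_neg, hsym, hg_neg, cos_pi_mul_nat_sub_half_mul_one_sub,
      mul_neg, cos_neg]
    ring
  have hshift : ∫ s, lotAtom g n s * lotAtom g n' (s - 1) = ∫ u, Φ u := by
    rw [← integral_sub_right_eq_self Φ 1]
    simp only [hΦ, add_sub_cancel]
  have hneg := integral_neg_eq_self Φ volume
  simp only [hodd, integral_neg] at hneg
  linarith

theorem integral_lotAtom_mul_lotAtom_sub_of_two_le {η : ℝ} (hη : η ≤ 1 / 2)
    (hsupp : ∀ t ∉ Set.Icc (-η) (1 + η), g t = 0) (n n' : ℕ) {d : ℤ} (hd : 2 ≤ d) :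
    ∫ s, lotAtom g n s * lotAtom g n' (s - d) = 0 := by
  have hd' : (2 : ℝ) ≤ d := by exact_mod_cast hd
  refine integral_mul_eq_zero_of_forall_notMem_Icc (c := d - η) (d := d + 1 + η)
    (fun s hs => lotAtom_eq_zero_of_notMem n hsupp hs) (fun s hs => ?_) (by linarith)
  refine lotAtom_eq_zero_of_notMem n' hsupp fun h => hs ⟨?_, ?_⟩ <;> linarith [h.1, h.2]

theorem integral_lotAtom_mul_lotAtom_sub {η : ℝ} (hη : η ≤ 1 / 2) (hg : MemLp g 2 volume)
    (hsupp : ∀ t ∉ Set.Icc (-η) (1 + η), g t = 0)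
    (hpart : ∀ t : ℝ, ∑' k : ℤ, g (t - k) ^ 2 = 1) (hsym : ∀ t : ℝ, g (1 - t) = g t)
    {n n' : ℕ} (hn : 1 ≤ n) (hn' : 1 ≤ n') (d : ℤ) :
    ∫ s, lotAtom g n s * lotAtom g n' (s - d) = if d = 0 ∧ n = n' then 1 else 0 := by
  obtain rfl | rfl | rfl | hd | hd : d = 0 ∨ d = 1 ∨ d = -1 ∨ 2 ≤ d ∨ 2 ≤ -d := by omega
  · simpa using integral_lotAtom_mul_lotAtom hg hpart hsym hn hn'
  · simpa using integral_lotAtom_mul_lotAtom_sub_one hsym n n'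
  · rw [integral_mul_comp_sub_comm]
    simpa [sub_eq_add_neg] using integral_lotAtom_mul_lotAtom_sub_one hsym n' n
  · rw [integral_lotAtom_mul_lotAtom_sub_of_two_le hη hsupp n n' hd, if_neg (by omega)]
  · rw [integral_mul_comp_sub_comm, if_neg (by omega)]
    simpa using integral_lotAtom_mul_lotAtom_sub_of_two_le hη hsupp n' n hd

end LotAtom

theorem lot_orthonormal_general (η : ℝ) (hη : η ≤ 1 / 2)
    (g : ℝ → ℝ) (hgmeas : Measurable g)
    (hsupp : ∀ t ∉ Set.Icc (-η) (1 + η), g t = 0)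
    (hpart : ∀ t : ℝ, ∑' k : ℤ, g (t - k) ^ 2 = 1)
    (hsym : ∀ t : ℝ, g (1 - t) = g t)
    (ψ : ℤ → ℕ → ℝ → ℝ)
    (hψ : ∀ (k : ℤ) (n : ℕ) (t : ℝ),
      ψ k n t = g (t - k) * (Real.sqrt 2 *
        Real.cos (Real.pi * ((n : ℝ) - 1 / 2) * (t - k)))) :
    (∀ (k : ℤ) (n : ℕ), 1 ≤ n → MemLp (ψ k n) 2 (volume : Measure ℝ)) ∧
    (∀ (k k' : ℤ) (n n' : ℕ), 1 ≤ n → 1 ≤ n' →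
      (∫ t, ψ k n t * ψ k' n' t ∂(volume : Measure ℝ)) =
        if k = k' ∧ n = n' then 1 else 0) := by
  have hg : MemLp g 2 volume := memLp_of_abs_le_of_forall_notMem_Icc 2
    hgmeas.aestronglyMeasurable (abs_le_one_of_tsum_sq_eq_one hpart) hsupp
  have hψ_eq : ∀ k n, ψ k n = fun t => lotAtom g n (t - k) := fun k n => funext (hψ k n)
  refine ⟨fun k n _ => ?_, fun k k' n n' hn hn' => ?_⟩
  · rw [hψ_eq]
    exact (memLp_lotAtom hg n).comp_measurePreserving (measurePreserving_sub_right volume _)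
  · have hshift : ∀ t : ℝ, t + k - k' = t - ((k' - k : ℤ) : ℝ) := fun t => by push_cast; ring
    rw [hψ_eq, hψ_eq, ← integral_add_right_eq_self _ (k : ℝ)]
    simp only [add_sub_cancel_right, hshift]
    rw [integral_lotAtom_mul_lotAtom_sub hη hg hsupp hpart hsym hn hn']
    simp [sub_eq_zero, eq_comm]

/-- the lapped orthogonal transform functions
`ψ_{k,n}(t) = g(t−k) √2 cos(π(n−1/2)(t−k))` built from a window `g` supported in
`[−η, 1+η]` with `Σ_k g(t−k)² = 1` and `g(1−t) = g(t)` form an orthonormal family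
in `L²(ℝ)`. -/
theorem lot_orthonormal (η : ℝ) (hη0 : 0 < η) (hη : η ≤ 1 / 2)
    (g : ℝ → ℝ) (hgmeas : Measurable g)
    (hsupp : ∀ t ∉ Set.Icc (-η) (1 + η), g t = 0)
    (hpart : ∀ t : ℝ, ∑' k : ℤ, g (t - k) ^ 2 = 1)
    (hsym : ∀ t : ℝ, g (1 - t) = g t)
    (ψ : ℤ → ℕ → ℝ → ℝ)
    (hψ : ∀ (k : ℤ) (n : ℕ) (t : ℝ),
      ψ k n t = g (t - k) * (Real.sqrt 2 *
        Real.cos (Real.pi * ((n : ℝ) - 1 / 2) * (t - k)))) :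
    (∀ (k : ℤ) (n : ℕ), 1 ≤ n → MemLp (ψ k n) 2 (volume : Measure ℝ)) ∧
    (∀ (k k' : ℤ) (n n' : ℕ), 1 ≤ n → 1 ≤ n' →
      (∫ t, ψ k n t * ψ k' n' t ∂(volume : Measure ℝ)) =
        if k = k' ∧ n = n' then 1 else 0) :=
  lot_orthonormal_general η hη g hgmeas hsupp hpart hsym ψ hψ
end
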